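/- Let I be a monomial ideal in R = k[x_1,…,x_n] generated by the monomials with exponent vectors in a finite set G, let λ_i = max_{γ∈G} γ_i, and let Î = I + ⟨x_1^{λ_1+1},…,x_n^{λ_n+1}⟩ be its artinian closure. Then Î is artinian, and every minimal generator of I remains a minimal generator of Î: if ν : Fin n → ℕ satisfies X^ν ∈ I and X^{ν−e_i} ∉ I for every i ∈ supp(ν), then also X^ν ∈ Î and X^{ν−e_i} ∉ Î for every i ∈ supp(ν). -/
import Mathlib

open MvPolynomial

noncomputable def Xpow (k : Type) [Field k] (n : ℕ) (ν : Fin n → ℕ) :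
    MvPolynomial (Fin n) k :=
  ∏ i, X i ^ ν i

lemma Xpow_eq_monomial (k : Type) [Field k] (n : ℕ) (ν : Fin n → ℕ) :
    Xpow k n ν = monomial (Finsupp.equivFunOnFinite.symm ν) (1 : k) := by
  rw [Xpow, ← prod_X_pow_eq_monomial]
  refine (Finset.prod_subset (Finset.subset_univ _) ?_).symm
  intro x _ hx
  rw [Finsupp.notMem_support_iff] at hx
  have hx' : ν x = 0 := hx
  rw [hx', pow_zero]

lemma mem_span_monomial (k : Type) [Field k] (n : ℕ) (ν : Fin n → ℕ)
    (S : Set (Fin n →₀ ℕ)) :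
    Xpow k n ν ∈ Ideal.span ((fun s => monomial s (1 : k)) '' S) ↔
      ∃ s ∈ S, ∀ x, s x ≤ ν x := by
  classical
  rw [Xpow_eq_monomial, mem_ideal_span_monomial_image,
    support_monomial, if_neg one_ne_zero]
  constructor
  · intro h
    obtain ⟨s, hs, hle⟩ := h _ (Finset.mem_singleton_self _)
    exact ⟨s, hs, fun x => hle x⟩
  · rintro ⟨s, hs, hle⟩ xi hxi
    rw [Finset.mem_singleton] at hxi
    subst hxi
    exact ⟨s, hs, fun x => hle x⟩

/-- The artinian closure `Î = I + ⟨x_1^{λ_1+1}, …, x_n^{λ_n+1}⟩`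
(where `λ i = max_{γ ∈ G} γ i`) is artinian, and every minimal generator of `I`
remains a minimal generator of `Î` (here `ν - e i` is `fun x => ν x - if x = i then 1 else 0`). -/
theorem stmt13 (k : Type) [Field k] (n : ℕ) (G : Finset (Fin n → ℕ))
    (I : Ideal (MvPolynomial (Fin n) k))
    (hI : I = Ideal.span (Xpow k n '' (G : Set (Fin n → ℕ))))
    (lam : Fin n → ℕ) (hlam : ∀ i, lam i = G.sup fun γ => γ i)
    (Ihat : Ideal (MvPolynomial (Fin n) k))
    (hIhat : Ihat = I ⊔ Ideal.span
      (Set.range fun i : Fin n => (X i : MvPolynomial (Fin n) k) ^ (lam i + 1))) :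
    (∀ i : Fin n, ∃ a : ℕ, (X i : MvPolynomial (Fin n) k) ^ a ∈ Ihat) ∧
      ∀ ν : Fin n → ℕ,
        (Xpow k n ν ∈ I ∧
          ∀ i, ν i ≠ 0 → Xpow k n (fun x => ν x - if x = i then 1 else 0) ∉ I) →
        (Xpow k n ν ∈ Ihat ∧
          ∀ i, ν i ≠ 0 → Xpow k n (fun x => ν x - if x = i then 1 else 0) ∉ Ihat) := by
  have hIm : ∀ ν : Fin n → ℕ, Xpow k n ν ∈ I ↔ ∃ γ ∈ G, ∀ x, γ x ≤ ν x := by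
    intro ν
    have himg : Xpow k n '' (G : Set (Fin n → ℕ)) =
        (fun s => monomial s (1 : k)) ''
          (⇑Finsupp.equivFunOnFinite.symm '' (G : Set (Fin n → ℕ))) := by
      rw [Set.image_image]
      exact Set.image_congr fun γ _ => Xpow_eq_monomial k n γ
    rw [hI, himg, mem_span_monomial]
    constructor
    · rintro ⟨s, ⟨γ, hγ, rfl⟩, hle⟩
      exact ⟨γ, hγ, fun x => hle x⟩
    · rintro ⟨γ, hγ, hle⟩
      exact ⟨_, ⟨γ, hγ, rfl⟩, fun x => hle x⟩
  have hIhatm : ∀ ν : Fin n → ℕ, Xpow k n ν ∈ Ihat ↔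
      (∃ γ ∈ G, ∀ x, γ x ≤ ν x) ∨ (∃ j, lam j + 1 ≤ ν j) := by
    intro ν
    have hrange : Set.range (fun i : Fin n => (X i : MvPolynomial (Fin n) k) ^ (lam i + 1)) =
        (fun s => monomial s (1 : k)) '' Set.range (fun i => Finsupp.single i (lam i + 1)) := by
      rw [← Set.range_comp]
      exact congrArg Set.range (funext fun i => X_pow_eq_monomial (R := k))
    have himg : Xpow k n '' (G : Set (Fin n → ℕ)) =
        (fun s => monomial s (1 : k)) ''
          (⇑Finsupp.equivFunOnFinite.symm '' (G : Set (Fin n → ℕ))) := by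
      rw [Set.image_image]
      exact Set.image_congr fun γ _ => Xpow_eq_monomial k n γ
    rw [hIhat, hI, ← Ideal.span_union, himg, hrange, ← Set.image_union, mem_span_monomial]
    constructor
    · rintro ⟨s, hs | hs, hle⟩
      · obtain ⟨γ, hγ, rfl⟩ := hs
        exact Or.inl ⟨γ, hγ, fun x => hle x⟩
      · obtain ⟨j, rfl⟩ := hs
        exact Or.inr ⟨j, by simpa using hle j⟩
    · rintro (⟨γ, hγ, hle⟩ | ⟨j, hj⟩)
      · exact ⟨_, Or.inl ⟨γ, hγ, rfl⟩, fun x => hle x⟩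
      · refine ⟨Finsupp.single j (lam j + 1), Or.inr ⟨j, rfl⟩, fun x => ?_⟩
        rcases eq_or_ne x j with rfl | hx
        · simpa using hj
        · simp [Finsupp.single_apply, (Ne.symm hx)]
  refine ⟨fun i => ⟨lam i + 1, hIhat ▸ Ideal.mem_sup_right (Ideal.subset_span ⟨i, rfl⟩)⟩, ?_⟩
  rintro ν ⟨hνI, hmin⟩
  refine ⟨hIhat ▸ Ideal.mem_sup_left hνI, fun i hi hmem => ?_⟩
  rcases (hIhatm _).1 hmem with h | ⟨j, hj⟩
  · exact hmin i hi ((hIm _).2 h)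
  · -- lam j + 1 ≤ ν j - (if j = i then 1 else 0) ≤ ν j
    have hjν : lam j + 1 ≤ ν j := le_trans hj (Nat.sub_le _ _)
    obtain ⟨γ, hγ, hle⟩ := (hIm ν).1 hνI
    refine hmin j (by omega) ((hIm _).2 ⟨γ, hγ, fun x => ?_⟩)
    rcases eq_or_ne x j with rfl | hx
    · have h1 : γ x ≤ lam x := hlam x ▸ Finset.le_sup (f := fun γ => γ x) hγ
      have h2 : lam x + 1 ≤ ν x := le_trans hj (Nat.sub_le _ _)
      show γ x ≤ ν x - if x = x then 1 else 0
      rw [if_pos rfl]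
      omega
    · simp only [if_neg hx, Nat.sub_zero]
      exact hle x
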